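/- arXiv:2004.12619 — 6 statements merged into one kernel-verified Lean document; each statement's English description precedes it below -/
import Mathlib

section
/- Any feasible orthogonal packing of a set of rectangular items into a W×H bin can be transformed into an equivalent feasible packing in which every item's x-coordinate belongs to the set of normal patterns N^x = { x | x < W, x = Σᵢ wᵢζᵢ, ζᵢ ∈ {0,1} } and every item's y-coordinate belongs to the analogous set N^y, by repeatedly shifting items down and left. -/
open Finset

section AuxPack

set_option linter.unusedSectionVars false

variable {ι : Type*} [Fintype ι] [DecidableEq ι]

/-- A feasible packing: containment plus pairwise non-overlap. -/
def Packs (w h : ι → ℕ) (W H : ℕ) (x y : ι → ℕ) : Prop :=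
  (∀ i, x i + w i ≤ W ∧ y i + h i ≤ H) ∧
  (∀ i j, i ≠ j →
    x i + w i ≤ x j ∨ x j + w j ≤ x i ∨ y i + h i ≤ y j ∨ y j + h j ≤ y i)

lemma Packs.swap {w h : ι → ℕ} {W H : ℕ} {x y : ι → ℕ}
    (hp : Packs w h W H x y) : Packs h w H W y x := by
  refine ⟨fun i => ⟨(hp.1 i).2, (hp.1 i).1⟩, fun i j hij => ?_⟩
  rcases hp.2 i j hij with h1 | h1 | h1 | h1 <;> tauto

/-- In a left-justified packing every x-coordinate is a subset sum of widths. -/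
lemma normalX {w h : ι → ℕ} {W H : ℕ} {x y : ι → ℕ}
    (hw : ∀ i, 0 < w i)
    (hp : Packs w h W H x y)
    (hjust : ∀ i, x i = 0 ∨ ¬ Packs w h W H (Function.update x i (x i - 1)) y) :
    ∀ i, ∃ S : Finset ι, (∀ j ∈ S, x j < x i) ∧ x i = ∑ j ∈ S, w j := by
  suffices H' : ∀ n i, x i = n →
      ∃ S : Finset ι, (∀ j ∈ S, x j < x i) ∧ x i = ∑ j ∈ S, w j by
    intro i; exact H' (x i) i rfl
  intro n
  induction n using Nat.strong_induction_on with
  | _ n ih =>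
    intro i hn
    rcases Nat.eq_zero_or_pos (x i) with h0 | hpos
    · exact ⟨∅, by simp [h0]⟩
    rcases hjust i with h0 | hnp
    · omega
    set x' := Function.update x i (x i - 1) with hx'
    have hvi : x' i = x i - 1 := Function.update_self i _ x
    have hvne : ∀ j, j ≠ i → x' j = x j := fun j hj => Function.update_of_ne hj _ x
    have hcont' : ∀ j, x' j + w j ≤ W ∧ y j + h j ≤ H := by
      intro j
      have h1 := (hp.1 j).1
      have h2 := (hp.1 j).2
      by_cases hji : j = i
      · subst hji; rw [hvi]; omega
      · rw [hvne j hji]; omega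
    have hd : ¬ (∀ a b, a ≠ b → x' a + w a ≤ x' b ∨ x' b + w b ≤ x' a ∨
        y a + h a ≤ y b ∨ y b + h b ≤ y a) := by
      intro hd; exact hnp ⟨hcont', hd⟩
    push_neg at hd
    obtain ⟨a, b, hab, h1, h2, h3, h4⟩ := hd
    have key : ∃ m, m ≠ i ∧ x m + w m = x i := by
      rcases hp.2 a b hab with ho | ho | ho | ho
      · -- x a + w a ≤ x b
        by_cases hai : a = i
        · have hbi : b ≠ i := fun e => hab (hai.trans e.symm)
          rw [hai, hvi] at h1 h2
          rw [hvne b hbi] at h1 h2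
          rw [hai] at ho
          omega
        · by_cases hbi : b = i
          · refine ⟨a, hai, ?_⟩
            rw [hbi, hvi] at h1 h2
            rw [hvne a hai] at h1 h2
            rw [hbi] at ho
            omega
          · rw [hvne a hai, hvne b hbi] at h1 h2
            omega
      · -- x b + w b ≤ x a
        by_cases hai : a = i
        · have hbi : b ≠ i := fun e => hab (hai.trans e.symm)
          refine ⟨b, hbi, ?_⟩
          rw [hai, hvi] at h1 h2
          rw [hvne b hbi] at h1 h2
          rw [hai] at ho
          omega
        · by_cases hbi : b = i
          · rw [hbi, hvi] at h1 h2
            rw [hvne a hai] at h1 h2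
            rw [hbi] at ho
            omega
          · rw [hvne a hai, hvne b hbi] at h1 h2
            omega
      · omega
      · omega
    obtain ⟨m, hmi, hm⟩ := key
    have hxm : x m < x i := by have := hw m; omega
    obtain ⟨S, hS1, hS2⟩ := ih (x m) (by omega) m rfl
    have hmS : m ∉ S := fun hmem => lt_irrefl _ (hS1 m hmem)
    refine ⟨insert m S, ?_, ?_⟩
    · intro j hj
      rcases Finset.mem_insert.mp hj with rfl | hjS
      · exact hxm
      · exact lt_trans (hS1 j hjS) hxm
    · rw [Finset.sum_insert hmS]
      omega

end AuxPack

/-- Any feasible orthogonal packing can be transformed into one in which every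
x-coordinate is a normal pattern (a subset sum of widths, `< W`) and every
y-coordinate is a normal pattern in the y-direction. -/
theorem stmt_1 {ι : Type*} [Fintype ι] (w h : ι → ℕ) (W H : ℕ)
    (hw : ∀ i, 0 < w i) (hh : ∀ i, 0 < h i)
    (x y : ι → ℕ)
    (hcont : ∀ i, x i + w i ≤ W ∧ y i + h i ≤ H)
    (hdisj : ∀ i j, i ≠ j →
      x i + w i ≤ x j ∨ x j + w j ≤ x i ∨ y i + h i ≤ y j ∨ y j + h j ≤ y i) :
    ∃ x' y' : ι → ℕ,
      (∀ i, x' i + w i ≤ W ∧ y' i + h i ≤ H) ∧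
      (∀ i j, i ≠ j →
        x' i + w i ≤ x' j ∨ x' j + w j ≤ x' i ∨ y' i + h i ≤ y' j ∨ y' j + h j ≤ y' i) ∧
      (∀ i, (x' i < W ∧ ∃ S : Finset ι, x' i = ∑ j ∈ S, w j) ∧
            (y' i < H ∧ ∃ S : Finset ι, y' i = ∑ j ∈ S, h j)) := by
  classical
  have hp : Packs w h W H x y := ⟨hcont, hdisj⟩
  clear hcont hdisj
  suffices main : ∀ n (x y : ι → ℕ), ∑ i, (x i + y i) = n → Packs w h W H x y →
      ∃ x' y', Packs w h W H x' y' ∧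
        (∀ i, (∃ S : Finset ι, x' i = ∑ j ∈ S, w j) ∧
              (∃ S : Finset ι, y' i = ∑ j ∈ S, h j)) by
    obtain ⟨x', y', hp', hn'⟩ := main _ x y rfl hp
    refine ⟨x', y', hp'.1, hp'.2, fun i => ⟨⟨?_, (hn' i).1⟩, ?_, (hn' i).2⟩⟩
    · have := (hp'.1 i).1; have := hw i; omega
    · have := (hp'.1 i).2; have := hh i; omega
  intro n
  induction n using Nat.strong_induction_on with
  | _ n ih =>
    intro x y hsum hp
    by_cases hc : ∃ i, (x i ≠ 0 ∧ Packs w h W H (Function.update x i (x i - 1)) y) ∨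
        (y i ≠ 0 ∧ Packs w h W H x (Function.update y i (y i - 1)))
    · obtain ⟨i, hi | hi⟩ := hc
      · obtain ⟨hne, hp'⟩ := hi
        refine ih (∑ j, (Function.update x i (x i - 1) j + y j)) ?_ _ _ rfl hp'
        rw [← hsum]
        apply Finset.sum_lt_sum
        · intro j _
          rcases eq_or_ne j i with rfl | hji
          · rw [Function.update_self]; omega
          · rw [Function.update_of_ne hji]
        · exact ⟨i, Finset.mem_univ i, by rw [Function.update_self]; omega⟩
      · obtain ⟨hne, hp'⟩ := hi
        refine ih (∑ j, (x j + Function.update y i (y i - 1) j)) ?_ _ _ rfl hp'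
        rw [← hsum]
        apply Finset.sum_lt_sum
        · intro j _
          rcases eq_or_ne j i with rfl | hji
          · rw [Function.update_self]; omega
          · rw [Function.update_of_ne hji]
        · exact ⟨i, Finset.mem_univ i, by rw [Function.update_self]; omega⟩
    · push_neg at hc
      have hjx : ∀ i, x i = 0 ∨ ¬ Packs w h W H (Function.update x i (x i - 1)) y := by
        intro i
        rcases Nat.eq_zero_or_pos (x i) with h0 | hpos
        · exact Or.inl h0
        · exact Or.inr ((hc i).1 (by omega))
      have hjy : ∀ i, y i = 0 ∨ ¬ Packs h w H W (Function.update y i (y i - 1)) x := by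
        intro i
        rcases Nat.eq_zero_or_pos (y i) with h0 | hpos
        · exact Or.inl h0
        · exact Or.inr (fun hpk => (hc i).2 (by omega) hpk.swap)
      refine ⟨x, y, hp, fun i => ⟨?_, ?_⟩⟩
      · obtain ⟨S, _, hS⟩ := normalX hw hp hjx i
        exact ⟨S, hS⟩
      · obtain ⟨S, _, hS⟩ := normalX hh hp.swap hjy i
        exact ⟨S, hS⟩
end

section
/- Shrinking the bin width preserves feasibility: let W̄ be the maximum value not exceeding W that is expressible as a sum of a subset of the item widths. Then a set of items can be feasibly packed into a bin of width W and height H if and only if it can be feasibly packed into a bin of width W̄ and height H. -/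
/-!
Any packing can be pushed to the left: place each item at the right edge of the rightmost item
that lies to its left and shares a horizontal strip with it (or at `0` if there is none). Items
only move left, so the new packing still fits and stays disjoint, and the right edge of every item
becomes the total width of a chain of items, i.e. a subset sum of the widths. Such a right edge is
at most `W`, hence at most `W'`, so the compacted packing fits into width `W'`.
-/

open Finset

/-- Feasibility of packing a set of items into a `W × H` bin. -/
def feasiblePack {ι : Type*} [Fintype ι] (w h : ι → ℕ) (W H : ℕ) : Prop :=
  ∃ x y : ι → ℕ, (∀ i, x i + w i ≤ W ∧ y i + h i ≤ H) ∧
    ∀ i j, i ≠ j →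
      x i + w i ≤ x j ∨ x j + w j ≤ x i ∨ y i + h i ≤ y j ∨ y j + h j ≤ y i

section Compaction

variable {ι : Type*} [Fintype ι] (w h x y : ι → ℕ)

/-- The conjunct `x j < x i` follows from the next one when widths are positive; it is what makes
the recursion in `compactLeft` terminate. -/
def BlocksLeft (j i : ι) : Prop :=
  x j < x i ∧ x j + w j ≤ x i ∧ y j < y i + h i ∧ y i < y j + h j

open scoped Classical in
noncomputable def compactLeft (i : ι) : ℕ :=
  (univ.filter (BlocksLeft w h x y · i)).attach.sup fun j => compactLeft j.1 + w j.1
termination_by x i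
decreasing_by exact (mem_filter.mp j.2).2.1

variable {w h x y}

theorem compactLeft_add_le {i j : ι} (hji : BlocksLeft w h x y j i) :
    compactLeft w h x y j + w j ≤ compactLeft w h x y i := by
  classical
  conv_rhs => rw [compactLeft]
  exact le_sup (f := fun k => compactLeft w h x y k.1 + w k.1)
    (mem_attach (univ.filter (BlocksLeft w h x y · i)) ⟨j, mem_filter.mpr ⟨mem_univ _, hji⟩⟩)

theorem compactLeft_le (i : ι) : compactLeft w h x y i ≤ x i := by
  classical
  rw [compactLeft]
  refine Finset.sup_le ?_
  rintro ⟨j, hj⟩ -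
  have hji := (mem_filter.mp hj).2
  exact (Nat.add_le_add_right (compactLeft_le j) _).trans hji.2.1
termination_by x i
decreasing_by exact hji.1

theorem compactLeft_eq_zero_or_exists (i : ι) :
    compactLeft w h x y i = 0 ∨
      ∃ j, BlocksLeft w h x y j i ∧ compactLeft w h x y i = compactLeft w h x y j + w j := by
  classical
  rw [compactLeft]
  rcases (univ.filter (BlocksLeft w h x y · i)).attach.eq_empty_or_nonempty with hs | hs
  · exact Or.inl (by rw [hs, sup_empty]; rfl)
  · obtain ⟨j, -, hj⟩ := exists_mem_eq_sup _ hs fun j => compactLeft w h x y j.1 + w j.1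
    exact Or.inr ⟨j.1, (mem_filter.mp j.2).2, hj⟩

theorem exists_sum_eq_compactLeft_add (i : ι) :
    ∃ S : Finset ι, ∑ j ∈ S, w j = compactLeft w h x y i + w i ∧ ∀ j ∈ S, x j ≤ x i := by
  classical
  rcases compactLeft_eq_zero_or_exists (w := w) (h := h) (x := x) (y := y) i with h0 | ⟨j, hji, hj⟩
  · exact ⟨{i}, by simp [h0], by simp⟩
  · obtain ⟨S, hS, hSx⟩ := exists_sum_eq_compactLeft_add j
    have hiS : i ∉ S := fun hi => absurd (hSx i hi) (not_le.mpr hji.1)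
    refine ⟨insert i S, ?_, ?_⟩
    · rw [sum_insert hiS, hS, hj]; ring
    · simp only [mem_insert, forall_eq_or_imp, le_refl, true_and]
      exact fun k hk => (hSx k hk).trans hji.1.le
termination_by x i
decreasing_by exact hji.1

theorem compactLeft_nonoverlap (hw : ∀ i, 0 < w i) {i j : ι}
    (hij : x i + w i ≤ x j ∨ x j + w j ≤ x i ∨ y i + h i ≤ y j ∨ y j + h j ≤ y i) :
    compactLeft w h x y i + w i ≤ compactLeft w h x y j ∨
      compactLeft w h x y j + w j ≤ compactLeft w h x y i ∨
        y i + h i ≤ y j ∨ y j + h j ≤ y i := by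
  by_cases hy : y i + h i ≤ y j ∨ y j + h j ≤ y i
  · exact Or.inr (Or.inr hy)
  push Not at hy
  rcases hij with hx | hx | hy' | hy'
  · exact Or.inl (compactLeft_add_le ⟨by linarith [hw i], hx, hy.2, hy.1⟩)
  · exact Or.inr (Or.inl (compactLeft_add_le ⟨by linarith [hw j], hx, hy.1, hy.2⟩))
  all_goals omega

end Compaction

namespace feasiblePack

variable {ι : Type*} [Fintype ι] {w h : ι → ℕ} {W H : ℕ}

theorem mono_width {W' : ℕ} (hW : W' ≤ W) (hp : feasiblePack w h W' H) :
    feasiblePack w h W H :=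
  let ⟨x, y, hbin, hsep⟩ := hp
  ⟨x, y, fun i => ⟨(hbin i).1.trans hW, (hbin i).2⟩, hsep⟩

theorem exists_subset_sum_right_edges (hw : ∀ i, 0 < w i) (hp : feasiblePack w h W H) :
    ∃ x y : ι → ℕ, (∀ i, (∃ S : Finset ι, ∑ j ∈ S, w j = x i + w i) ∧
        x i + w i ≤ W ∧ y i + h i ≤ H) ∧
      ∀ i j, i ≠ j →
        x i + w i ≤ x j ∨ x j + w j ≤ x i ∨ y i + h i ≤ y j ∨ y j + h j ≤ y i := by
  obtain ⟨x, y, hbin, hsep⟩ := hp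
  refine ⟨compactLeft w h x y, y, fun i => ⟨?_, ?_, (hbin i).2⟩,
    fun i j hij => compactLeft_nonoverlap hw (hsep i j hij)⟩
  · obtain ⟨S, hS, -⟩ := exists_sum_eq_compactLeft_add (w := w) (h := h) (x := x) (y := y) i
    exact ⟨S, hS⟩
  · exact (Nat.add_le_add_right (compactLeft_le i) _).trans (hbin i).1

end feasiblePack

theorem stmt_3_general {ι : Type*} [Fintype ι] (w h : ι → ℕ) (W W' H : ℕ)
    (hw : ∀ i, 0 < w i ∧ w i ≤ W)
    (hW' : W' ≤ W)
    (hmaxi : ∀ S : Finset ι, ∑ i ∈ S, w i ≤ W → ∑ i ∈ S, w i ≤ W') :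
    feasiblePack w h W H ↔ feasiblePack w h W' H := by
  refine ⟨fun hp => ?_, feasiblePack.mono_width hW'⟩
  obtain ⟨x, y, hbin, hsep⟩ := hp.exists_subset_sum_right_edges fun i => (hw i).1
  refine ⟨x, y, fun i => ⟨?_, (hbin i).2.2⟩, hsep⟩
  obtain ⟨⟨S, hS⟩, hxW, -⟩ := hbin i
  exact hS ▸ hmaxi S (hS ▸ hxW)

/-- Shrinking the bin width to the largest subset sum `W'` of item widths not exceeding
`W` preserves feasibility. -/
theorem stmt_3 {ι : Type*} [Fintype ι] (w h : ι → ℕ) (W W' H : ℕ)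
    (hw : ∀ i, 0 < w i ∧ w i ≤ W) (hh : ∀ i, 0 < h i ∧ h i ≤ H)
    (hW' : W' ≤ W)
    (hsum : ∃ S : Finset ι, ∑ i ∈ S, w i = W')
    (hmaxi : ∀ S : Finset ι, ∑ i ∈ S, w i ≤ W → ∑ i ∈ S, w i ≤ W') :
    feasiblePack w h W H ↔ feasiblePack w h W' H :=
  stmt_3_general w h W W' H hw hW' hmaxi
end

section
/- Lifting item widths preserves feasibility: fix an item i and let W̄ᵢ be the maximum sum of widths of a subset of I∖{i} not exceeding W − wᵢ. If wᵢ + W̄ᵢ < W, then the instance in which the width of item i is increased to W − W̄ᵢ admits a feasible packing into the W×H bin if and only if the original instance does. -/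
open Finset

/-- Horizontal feasibility (with fixed vertical coordinates `y`). -/
private def Pk {ι : Type*} (w h y : ι → ℕ) (W : ℕ) (x : ι → ℕ) : Prop :=
  (∀ i, x i + w i ≤ W) ∧
    ∀ i j, i ≠ j →
      x i + w i ≤ x j ∨ x j + w j ≤ x i ∨ y i + h i ≤ y j ∨ y j + h j ≤ y i

/-- Potential function: pushes `i0` left, and all other items away from `i0`. -/
private def Fv {ι : Type*} [Fintype ι] [DecidableEq ι] (i0 : ι) (W : ℕ) (x : ι → ℕ) : ℕ :=
  (Fintype.card ι + 1) * x i0 +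
    ∑ j ∈ univ.erase i0, (W - ((x j - x i0) + (x i0 - x j)))

private lemma Fv_split {ι : Type*} [Fintype ι] [DecidableEq ι] (i0 : ι) (W : ℕ)
    (x : ι → ℕ) (m : ι) (hm : m ≠ i0) :
    Fv i0 W x = (Fintype.card ι + 1) * x i0 +
      ((W - ((x m - x i0) + (x i0 - x m))) +
        ∑ j ∈ (univ.erase i0).erase m, (W - ((x j - x i0) + (x i0 - x j)))) := by
  rw [Fv, ← Finset.add_sum_erase _ _ (by simp [hm] : m ∈ univ.erase i0)]

private lemma Fv_update {ι : Type*} [Fintype ι] [DecidableEq ι] (i0 : ι) (W : ℕ)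
    (x : ι → ℕ) (m : ι) (v : ℕ) (hm : m ≠ i0) :
    Fv i0 W (Function.update x m v) = (Fintype.card ι + 1) * x i0 +
      ((W - ((v - x i0) + (x i0 - v))) +
        ∑ j ∈ (univ.erase i0).erase m, (W - ((x j - x i0) + (x i0 - x j)))) := by
  have hsum : ∀ j ∈ (univ.erase i0).erase m,
      (W - ((Function.update x m v j - Function.update x m v i0) +
        (Function.update x m v i0 - Function.update x m v j)))
        = (W - ((x j - x i0) + (x i0 - x j))) := by
    intro j hj
    rw [Function.update_of_ne (Finset.mem_erase.mp hj).1,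
      Function.update_of_ne (Ne.symm hm)]
  rw [Fv_split i0 W (Function.update x m v) m hm, Finset.sum_congr rfl hsum,
    Function.update_self, Function.update_of_ne (Ne.symm hm)]

private lemma Fv_update_i0 {ι : Type*} [Fintype ι] [DecidableEq ι] (i0 : ι) (W : ℕ)
    (x : ι → ℕ) (v : ℕ) :
    Fv i0 W (Function.update x i0 v) = (Fintype.card ι + 1) * v +
      ∑ j ∈ univ.erase i0, (W - ((x j - v) + (v - x j))) := by
  have hsum : ∀ j ∈ univ.erase i0,
      (W - ((Function.update x i0 v j - Function.update x i0 v i0) +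
        (Function.update x i0 v i0 - Function.update x i0 v j)))
        = (W - ((x j - v) + (v - x j))) := by
    intro j hj
    rw [Function.update_of_ne (Finset.mem_erase.mp hj).1, Function.update_self]
  rw [Fv, Finset.sum_congr rfl hsum, Function.update_self]

/-- Lifting the width of item `i0` to `W - W̄` (where `W̄` is the maximum subset sum of
the other widths not exceeding `W - w i0`, and `w i0 + W̄ < W`) preserves feasibility. -/
theorem stmt_4 {ι : Type*} [Fintype ι] [DecidableEq ι] (w h : ι → ℕ) (W H : ℕ) (i0 : ι)
    (hw : ∀ i, 0 < w i ∧ w i ≤ W) (hh : ∀ i, 0 < h i ∧ h i ≤ H)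
    (Wbar : ℕ)
    (hWbar : ∃ S : Finset ι, i0 ∉ S ∧ ∑ j ∈ S, w j = Wbar ∧ Wbar ≤ W - w i0)
    (hmaxi : ∀ S : Finset ι, i0 ∉ S → ∑ j ∈ S, w j ≤ W - w i0 → ∑ j ∈ S, w j ≤ Wbar)
    (hlift : w i0 + Wbar < W) :
    feasiblePack (Function.update w i0 (W - Wbar)) h W H ↔ feasiblePack w h W H := by
  classical
  have hWbarW : Wbar < W := by have := (hw i0).1; omega
  have hle : ∀ i, w i ≤ Function.update w i0 (W - Wbar) i := by
    intro i
    rw [Function.update_apply]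
    by_cases hi : i = i0
    · rw [if_pos hi, hi]; omega
    · rw [if_neg hi]
  constructor
  · -- lifted ⇒ original : shrink the width of i0 back
    rintro ⟨x, y, hc, hsep⟩
    refine ⟨x, y, fun i => ⟨?_, (hc i).2⟩, fun i j hij => ?_⟩
    · have h1 := (hc i).1; have h2 := hle i; omega
    · rcases hsep i j hij with hh'|hh'|hh'|hh'
      · left; have := hle i; omega
      · right; left; have := hle j; omega
      · right; right; left; exact hh'
      · right; right; right; exact hh'
  · -- original ⇒ lifted
    rintro ⟨x0, y, hc0, hsep0⟩
    have hex : ∃ m : ℕ, ∃ x : ι → ℕ, Pk w h y W x ∧ Fv i0 W x = m :=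
      ⟨Fv i0 W x0, x0, ⟨fun i => (hc0 i).1, hsep0⟩, rfl⟩
    obtain ⟨x, hPx, hFx⟩ := Nat.find_spec hex
    have hmin : ∀ x' : ι → ℕ, Pk w h y W x' → Fv i0 W x ≤ Fv i0 W x' := by
      intro x' hx'
      have h1 : Nat.find hex ≤ Fv i0 W x' := Nat.find_min' hex ⟨x', hx', rfl⟩
      omega
    have hxc : ∀ i, x i + w i ≤ W := hPx.1
    have hxs := hPx.2
    -- generic feasibility of a one-item horizontal move
    have hmove : ∀ (m : ι) (v : ℕ), v + w m ≤ W →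
        (∀ j, j ≠ m → x j + w j ≤ x m → x j + w j ≤ v) →
        (∀ j, j ≠ m → x m + w m ≤ x j → v + w m ≤ x j) →
        Pk w h y W (Function.update x m v) := by
      intro m v hvW hleft hright
      constructor
      · intro i
        rw [Function.update_apply]
        by_cases hi : i = m
        · rw [if_pos hi, hi]; exact hvW
        · rw [if_neg hi]; exact hxc i
      · intro i j hij
        rw [Function.update_apply, Function.update_apply]
        by_cases hi : i = m <;> by_cases hj : j = m
        · exact absurd (hi.trans hj.symm) hij
        · rw [if_pos hi, if_neg hj]
          have exi : x i = x m := by rw [hi]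
          have ewi : w i = w m := by rw [hi]
          have eyi : y i = y m := by rw [hi]
          have ehi : h i = h m := by rw [hi]
          rcases hxs i j hij with hh'|hh'|hh'|hh'
          · left; have := hright j (fun e => hj e) (by omega); omega
          · right; left; have := hleft j (fun e => hj e) (by omega); omega
          · right; right; left; exact hh'
          · right; right; right; exact hh'
        · rw [if_neg hi, if_pos hj]
          have exj : x j = x m := by rw [hj]
          have ewj : w j = w m := by rw [hj]
          rcases hxs i j hij with hh'|hh'|hh'|hh'
          · left; have := hleft i (fun e => hi e) (by omega); omega
          · right; left; have := hright i (fun e => hi e) (by omega); omega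
          · right; right; left; exact hh'
          · right; right; right; exact hh'
        · rw [if_neg hi, if_neg hj]
          exact hxs i j hij
    -- i0 has a left blocker (or is at 0)
    have moveI : x i0 ≠ 0 → ∃ k, k ≠ i0 ∧ x k + w k = x i0 := by
      intro h0
      by_contra hcon
      push_neg at hcon
      have hP' : Pk w h y W (Function.update x i0 (x i0 - 1)) := by
        refine hmove i0 (x i0 - 1) (by have := hxc i0; omega) ?_ ?_
        · intro j hj hjle
          have := hcon j hj
          omega
        · intro j hj hjge
          omega
      have hlt : Fv i0 W (Function.update x i0 (x i0 - 1)) < Fv i0 W x := by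
        rw [Fv_update_i0, Fv]
        have hsum : ∑ j ∈ univ.erase i0, (W - ((x j - (x i0 - 1)) + ((x i0 - 1) - x j)))
            ≤ (∑ j ∈ univ.erase i0, (W - ((x j - x i0) + (x i0 - x j)))) +
              (univ.erase i0).card := by
          calc ∑ j ∈ univ.erase i0, (W - ((x j - (x i0 - 1)) + ((x i0 - 1) - x j)))
              ≤ ∑ j ∈ univ.erase i0, ((W - ((x j - x i0) + (x i0 - x j))) + 1) :=
                Finset.sum_le_sum fun j _ => by omega
            _ = _ := by rw [Finset.sum_add_distrib, Finset.sum_const, smul_eq_mul, mul_one]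
        have hcard : (univ.erase i0).card ≤ Fintype.card ι := by
          have := Finset.card_erase_of_mem (Finset.mem_univ i0)
          rw [Finset.card_univ] at this
          omega
        have hmul : (Fintype.card ι + 1) * x i0
            = (Fintype.card ι + 1) * (x i0 - 1) + (Fintype.card ι + 1) := by
          have he : x i0 - 1 + 1 = x i0 := by omega
          calc (Fintype.card ι + 1) * x i0
              = (Fintype.card ι + 1) * (x i0 - 1 + 1) := by rw [he]
            _ = (Fintype.card ι + 1) * (x i0 - 1) + (Fintype.card ι + 1) := by ring
        omega
      exact absurd hlt (not_lt.mpr (hmin _ hP'))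
    -- items strictly left of i0 have left blockers (or are at 0)
    have moveL : ∀ m, x m + w m ≤ x i0 → x m ≠ 0 → ∃ k, k ≠ m ∧ x k + w k = x m := by
      intro m hm h0
      have hmi0 : m ≠ i0 := by
        intro e; rw [e] at hm; have := (hw i0).1; omega
      by_contra hcon
      push_neg at hcon
      have hP' : Pk w h y W (Function.update x m (x m - 1)) := by
        refine hmove m (x m - 1) (by have := hxc m; omega) ?_ ?_
        · intro j hj hjle
          have := hcon j hj
          omega
        · intro j hj hjge
          omega
      have hlt : Fv i0 W (Function.update x m (x m - 1)) < Fv i0 W x := by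
        rw [Fv_update i0 W x m (x m - 1) hmi0, Fv_split i0 W x m hmi0]
        have h1 := hxc i0
        have h2 := (hw i0).1
        have h3 := (hw m).1
        omega
      exact absurd hlt (not_lt.mpr (hmin _ hP'))
    -- items strictly right of i0 have right blockers (or touch the wall)
    have moveR : ∀ k, x i0 < x k → x k + w k ≠ W → ∃ k', k' ≠ k ∧ x k' = x k + w k := by
      intro k hk hkW
      have hki0 : k ≠ i0 := by intro e; rw [e] at hk; omega
      by_contra hcon
      push_neg at hcon
      have hP' : Pk w h y W (Function.update x k (x k + 1)) := by
        refine hmove k (x k + 1) (by have := hxc k; omega) ?_ ?_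
        · intro j hj hjle
          omega
        · intro j hj hjge
          have := hcon j hj
          omega
      have hlt : Fv i0 W (Function.update x k (x k + 1)) < Fv i0 W x := by
        rw [Fv_update i0 W x k (x k + 1) hki0, Fv_split i0 W x k hki0]
        have h1 := hxc k
        have h2 := (hw k).1
        omega
      exact absurd hlt (not_lt.mpr (hmin _ hP'))
    -- left chains
    have chainL : ∀ c : ℕ, ∀ m, x m + w m ≤ x i0 → x m ≤ c →
        ∃ S : Finset ι, i0 ∉ S ∧ (∀ s ∈ S, x s + w s ≤ x m + w m) ∧
          ∑ s ∈ S, w s = x m + w m := by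
      intro c
      induction c with
      | zero =>
        intro m hm hc
        have hmi0 : m ≠ i0 := by intro e; rw [e] at hm; have := (hw i0).1; omega
        exact ⟨{m}, by simp [Ne.symm hmi0], by simp, by simp; omega⟩
      | succ c ih =>
        intro m hm hc
        have hmi0 : m ≠ i0 := by intro e; rw [e] at hm; have := (hw i0).1; omega
        by_cases h0 : x m = 0
        · exact ⟨{m}, by simp [Ne.symm hmi0], by simp, by simp; omega⟩
        · obtain ⟨k, hk, hkeq⟩ := moveL m hm h0
          have hkm : x k + w k ≤ x i0 := by have := (hw m).1; omega
          have hkc : x k ≤ c := by have := (hw k).1; omega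
          obtain ⟨S, hS1, hS2, hS3⟩ := ih k hkm hkc
          have hmS : m ∉ S := by
            intro hmem
            have := hS2 m hmem
            have := (hw m).1
            omega
          refine ⟨insert m S, ?_, ?_, ?_⟩
          · simp only [Finset.mem_insert, not_or]
            exact ⟨Ne.symm hmi0, hS1⟩
          · intro s hs
            rcases Finset.mem_insert.mp hs with e|hsS
            · rw [e]
            · have := hS2 s hsS; have := (hw m).1; omega
          · rw [Finset.sum_insert hmS, hS3]; omega
    -- the left chain below i0
    have hT : ∃ T : Finset ι, i0 ∉ T ∧ (∀ s ∈ T, x s + w s ≤ x i0) ∧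
        ∑ s ∈ T, w s = x i0 := by
      by_cases h0 : x i0 = 0
      · exact ⟨∅, by simp, by simp, by simp [h0]⟩
      · obtain ⟨k, hk, hkeq⟩ := moveI h0
        have hkc : x k + w k ≤ x i0 := le_of_eq hkeq
        obtain ⟨S, h1, h2, h3⟩ := chainL (x k) k hkc le_rfl
        exact ⟨S, h1, fun s hs => le_trans (h2 s hs) (le_of_eq hkeq),
          by rw [h3, hkeq]⟩
    -- right chains
    have chainR : ∀ d : ℕ, ∀ k, x i0 < x k → W - x k ≤ d →
        ∃ S : Finset ι, i0 ∉ S ∧ (∀ s ∈ S, x k ≤ x s) ∧ ∑ s ∈ S, w s = W - x k := by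
      intro d
      induction d with
      | zero =>
        intro k hk hd
        exfalso
        have := hxc k
        have := (hw k).1
        omega
      | succ d ih =>
        intro k hk hd
        have hki0 : k ≠ i0 := by intro e; rw [e] at hk; omega
        by_cases hWw : x k + w k = W
        · exact ⟨{k}, by simp [Ne.symm hki0], by simp, by simp; omega⟩
        · obtain ⟨k', hk', hkeq⟩ := moveR k hk hWw
          have h1 : x i0 < x k' := by have := (hw k).1; omega
          have h2 : W - x k' ≤ d := by have := hxc k; have := (hw k).1; omega
          obtain ⟨S, hS1, hS2, hS3⟩ := ih k' h1 h2
          have hkS : k ∉ S := by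
            intro hmem
            have := hS2 k hmem
            have := (hw k).1
            omega
          refine ⟨insert k S, ?_, ?_, ?_⟩
          · simp only [Finset.mem_insert, not_or]
            exact ⟨Ne.symm hki0, hS1⟩
          · intro s hs
            rcases Finset.mem_insert.mp hs with e|hsS
            · rw [e]
            · have := hS2 s hsS; have := (hw k).1; omega
          · rw [Finset.sum_insert hkS, hS3]
            have := hxc k
            omega
    obtain ⟨T, hT1, hT2, hT3⟩ := hT
    -- x i0 ≤ Wbar
    have hXle : x i0 ≤ Wbar := by
      have hb : ∑ s ∈ T, w s ≤ W - w i0 := by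
        rw [hT3]; have := hxc i0; omega
      have := hmaxi T hT1 hb
      omega
    -- every item strictly right of i0 is beyond x i0 + (W - Wbar)
    have hR : ∀ j, x i0 + w i0 ≤ x j → x i0 + (W - Wbar) ≤ x j := by
      intro j hj
      have hji0 : x i0 < x j := by have := (hw i0).1; omega
      obtain ⟨S, hS1, hS2, hS3⟩ := chainR (W - x j) j hji0 le_rfl
      have hdisj : Disjoint T S := by
        rw [Finset.disjoint_left]
        intro s hsT hsS
        have := hT2 s hsT
        have := hS2 s hsS
        have := (hw s).1
        omega
      have hiU : i0 ∉ T ∪ S := by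
        simp only [Finset.mem_union, not_or]
        exact ⟨hT1, hS1⟩
      have hsum : ∑ s ∈ T ∪ S, w s = x i0 + (W - x j) := by
        rw [Finset.sum_union hdisj, hT3, hS3]
      have hb : ∑ s ∈ T ∪ S, w s ≤ W - w i0 := by
        rw [hsum]; have := hxc j; have := (hw j).1; omega
      have hfin := hmaxi _ hiU hb
      rw [hsum] at hfin
      have := hxc j
      omega
    -- final packing: widen i0 in place
    refine ⟨x, y, fun i => ⟨?_, (hc0 i).2⟩, fun i j hij => ?_⟩
    · rw [Function.update_apply]
      by_cases hi : i = i0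
      · rw [if_pos hi, hi]; omega
      · rw [if_neg hi]; exact hxc i
    · rw [Function.update_apply, Function.update_apply]
      by_cases hi : i = i0 <;> by_cases hj : j = i0
      · exact absurd (hi.trans hj.symm) hij
      · rw [if_pos hi, if_neg hj]
        have exi : x i = x i0 := by rw [hi]
        have ewi : w i = w i0 := by rw [hi]
        rcases hxs i j hij with hh'|hh'|hh'|hh'
        · left; have := hR j (by omega); omega
        · right; left; omega
        · right; right; left; exact hh'
        · right; right; right; exact hh'
      · rw [if_neg hi, if_pos hj]
        have exj : x j = x i0 := by rw [hj]
        have ewj : w j = w i0 := by rw [hj]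
        rcases hxs i j hij with hh'|hh'|hh'|hh'
        · left; omega
        · right; left; have := hR i (by omega); omega
        · right; right; left; exact hh'
        · right; right; right; exact hh'
      · rw [if_neg hi, if_neg hj]
        exact hxs i j hij
end

section
/- If f and g are dual feasible functions and a set of rectangular items with normalized sizes (wᵢ, hᵢ) ∈ [0,1]² can be feasibly packed into the unit square bin, then the items with modified sizes (f(wᵢ), g(hᵢ)) satisfy Σᵢ f(wᵢ)·g(hᵢ) ≤ 1; hence ⌈Σᵢ f(wᵢ)g(hᵢ)⌉ restricted to each bin gives a valid lower bound: the total modified area over all items, rounded up, is a lower bound on the number of unit bins needed. -/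
open Finset

/-- `f : [0,1] → [0,1]` is a dual feasible function if whenever a finite multiset of
values in `[0,1]` has sum at most `1`, so do the images under `f`. -/
def IsDFF (f : ℝ → ℝ) : Prop :=
  (∀ x ∈ Set.Icc (0 : ℝ) 1, f x ∈ Set.Icc (0 : ℝ) 1) ∧
  ∀ S : Multiset ℝ, (∀ x ∈ S, x ∈ Set.Icc (0 : ℝ) 1) → S.sum ≤ 1 → (S.map f).sum ≤ 1

open scoped Classical

lemma dff_zero {g : ℝ → ℝ} (hg : IsDFF g) : g 0 = 0 := by
  have h0 : (0:ℝ) ∈ Set.Icc (0:ℝ) 1 := by constructor <;> norm_num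
  have hge : 0 ≤ g 0 := (hg.1 0 h0).1
  by_contra hne
  have hpos : 0 < g 0 := lt_of_le_of_ne hge (Ne.symm hne)
  obtain ⟨n, hn⟩ := exists_nat_gt (1 / g 0)
  have hb := hg.2 (Multiset.replicate n 0) (by
    intro x hx
    rw [Multiset.eq_of_mem_replicate hx]; exact h0) (by simp)
  rw [Multiset.map_replicate, Multiset.sum_replicate, nsmul_eq_mul] at hb
  have : 1 / g 0 * g 0 < n * g 0 := by exact (mul_lt_mul_of_pos_right hn hpos)
  rw [one_div_mul_cancel (ne_of_gt hpos)] at this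
  linarith

lemma disj_sum {ι : Type*} (x w : ι → ℝ) :
    ∀ (n : ℕ) (s : Finset ι) (c : ℝ), s.card ≤ n → c ≤ 1 →
    (∀ i ∈ s, 0 ≤ w i) → (∀ i ∈ s, c ≤ x i) → (∀ i ∈ s, x i + w i ≤ 1) →
    (∀ i ∈ s, ∀ j ∈ s, i ≠ j → x i + w i ≤ x j ∨ x j + w j ≤ x i) →
    ∑ i ∈ s, w i ≤ 1 - c := by
  intro n
  induction n with
  | zero =>
    intro s c hcard hc _ _ _ _
    rw [Finset.card_eq_zero.mp (Nat.le_zero.mp hcard)]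
    simp; linarith
  | succ n ih =>
    intro s c hcard hc hw hxc hx1 hd
    set spos := s.filter (fun i => 0 < w i) with hspos
    have hsum : ∑ i ∈ s, w i = ∑ i ∈ spos, w i := by
      rw [hspos, Finset.sum_filter_of_ne]
      intro i hi hne
      exact lt_of_le_of_ne (hw i hi) (Ne.symm hne)
    rw [hsum]
    by_cases hemp : spos = ∅
    · rw [hemp]; simp; linarith
    · obtain ⟨i0, hi0mem, hi0min⟩ :=
        Finset.exists_min_image spos x (Finset.nonempty_of_ne_empty hemp)
      have hi0s : i0 ∈ s := Finset.mem_filter.mp hi0mem |>.1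
      have hrest : ∀ j ∈ spos.erase i0, x i0 + w i0 ≤ x j := by
        intro j hj
        have hjmem := Finset.mem_of_mem_erase hj
        have hjs : j ∈ s := Finset.mem_filter.mp hjmem |>.1
        have hjw : 0 < w j := (Finset.mem_filter.mp hjmem).2
        have hne : j ≠ i0 := Finset.ne_of_mem_erase hj
        rcases hd i0 hi0s j hjs (Ne.symm hne) with h1 | h1
        · exact h1
        · exact absurd h1 (by have := hi0min j hjmem; linarith)
      have hcard' : (spos.erase i0).card ≤ n := by
        have h1 : spos.card ≤ s.card := Finset.card_filter_le _ _
        have h2 := Finset.card_erase_of_mem hi0mem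
        omega
      have ihr := ih (spos.erase i0) (x i0 + w i0) hcard' (hx1 i0 hi0s)
        (fun i hi => hw i (Finset.mem_filter.mp (Finset.mem_of_mem_erase hi)).1)
        hrest
        (fun i hi => hx1 i (Finset.mem_filter.mp (Finset.mem_of_mem_erase hi)).1)
        (fun i hi j hj hne => hd i (Finset.mem_filter.mp (Finset.mem_of_mem_erase hi)).1
          j (Finset.mem_filter.mp (Finset.mem_of_mem_erase hj)).1 hne)
      rw [← Finset.add_sum_erase _ _ hi0mem]
      have := hxc i0 hi0s
      linarith

lemma sweep {ι : Type*} (s : Finset ι) (p : ι → ℕ) (y h : ι → ℝ) (N : ℕ)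
    (hh : ∀ i ∈ s, 0 < p i → 0 < h i)
    (hcov : ∀ t : ℝ, (∑ i ∈ s.filter (fun i => y i ≤ t ∧ t < y i + h i), p i) ≤ N) :
    ∀ (n : ℕ) (e : ℝ), (s.filter (fun i => 0 < p i ∧ e ≤ y i)).card ≤ n →
    (∀ t : ℝ, e ≤ t → (∑ i ∈ s.filter (fun i => y i ≤ t ∧ t < y i + h i), p i) = N →
        ∃ j ∈ s, 0 < p j ∧ e ≤ y j ∧ y j ≤ t ∧ t < y j + h j) →
    ∃ C : Finset ι, C ⊆ s ∧ (∀ i ∈ C, 0 < p i ∧ e ≤ y i) ∧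
      (∀ i ∈ C, ∀ j ∈ C, i ≠ j → y i + h i ≤ y j ∨ y j + h j ≤ y i) ∧
      (∀ t : ℝ, e ≤ t → (∑ i ∈ s.filter (fun i => y i ≤ t ∧ t < y i + h i), p i) = N →
        ∃ c ∈ C, y c ≤ t ∧ t < y c + h c) := by
  intro n
  induction n with
  | zero =>
    intro e hcard hinv
    refine ⟨∅, by simp, by simp, by simp, ?_⟩
    intro t ht hdeep
    obtain ⟨j, hjs, hjp, hjey, _, _⟩ := hinv t ht hdeep
    exfalso
    have : j ∈ s.filter (fun i => 0 < p i ∧ e ≤ y i) :=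
      Finset.mem_filter.mpr ⟨hjs, hjp, hjey⟩
    have := Finset.card_pos.mpr ⟨j, this⟩
    omega
  | succ n ih =>
    intro e hcard hinv
    set A := s.filter (fun i => 0 < p i ∧ e ≤ y i) with hA
    by_cases hemp : A = ∅
    · refine ⟨∅, by simp, by simp, by simp, ?_⟩
      intro t ht hdeep
      obtain ⟨j, hjs, hjp, hjey, _, _⟩ := hinv t ht hdeep
      exfalso
      have : j ∈ A := Finset.mem_filter.mpr ⟨hjs, hjp, hjey⟩
      rw [hemp] at this; exact absurd this (Finset.notMem_empty j)
    · obtain ⟨i0, hi0A, hi0min⟩ :=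
        Finset.exists_min_image A y (Finset.nonempty_of_ne_empty hemp)
      have hi0s : i0 ∈ s := (Finset.mem_filter.mp hi0A).1
      have hi0p : 0 < p i0 := (Finset.mem_filter.mp hi0A).2.1
      have hi0e : e ≤ y i0 := (Finset.mem_filter.mp hi0A).2.2
      have hi0h : 0 < h i0 := hh i0 hi0s hi0p
      set e' := y i0 + h i0 with he'
      have hee' : e ≤ e' := by linarith
      -- the invariant at e'
      have hinv' : ∀ t : ℝ, e' ≤ t →
          (∑ i ∈ s.filter (fun i => y i ≤ t ∧ t < y i + h i), p i) = N →
          ∃ j ∈ s, 0 < p j ∧ e' ≤ y j ∧ y j ≤ t ∧ t < y j + h j := by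
        intro t ht hdeep
        by_contra hno
        push_neg at hno
        set D := s.filter (fun i => y i ≤ t ∧ t < y i + h i) with hD
        set Dp := D.filter (fun i => 0 < p i) with hDp
        have hDpsum : ∑ i ∈ Dp, p i = N := by
          rw [hDp, Finset.sum_filter_of_ne (fun i _ hne => Nat.pos_of_ne_zero hne)]
          exact hdeep
        have hi0D : i0 ∉ D := by
          intro hmem
          have := (Finset.mem_filter.mp hmem).2.2
          linarith
        -- all positive covering intervals start before e'
        have hjlt : ∀ j ∈ Dp, y j < e' := by
          intro j hj
          have hjD := (Finset.mem_filter.mp hj).1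
          have hjs : j ∈ s := (Finset.mem_filter.mp hjD).1
          have hjc := (Finset.mem_filter.mp hjD).2
          have hjp := (Finset.mem_filter.mp hj).2
          by_contra hge
          push_neg at hge
          exact absurd hjc.2 (not_lt.mpr (hno j hjs hjp hge hjc.1))
        set B := insert i0 Dp with hB
        obtain ⟨u, huB, humax⟩ :=
          Finset.exists_max_image B y ⟨i0, Finset.mem_insert_self _ _⟩
        have hulty : y u < e' := by
          rcases Finset.mem_insert.mp huB with rfl | hu
          · linarith
          · exact hjlt u hu
        -- every element of B covers the point (y u)
        have hBcov : ∀ j ∈ B, y j ≤ y u ∧ y u < y j + h j := by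
          intro j hj
          refine ⟨humax j hj, ?_⟩
          rcases Finset.mem_insert.mp hj with rfl | hjDp
          · linarith
          · have hjD := (Finset.mem_filter.mp hjDp).1
            have hjc := (Finset.mem_filter.mp hjD).2
            linarith
        have hBsub : B ⊆ s.filter (fun i => y i ≤ y u ∧ y u < y i + h i) := by
          intro j hj
          refine Finset.mem_filter.mpr ⟨?_, hBcov j hj⟩
          rcases Finset.mem_insert.mp hj with rfl | hjDp
          · exact hi0s
          · exact (Finset.mem_filter.mp ((Finset.mem_filter.mp hjDp).1)).1
        have hi0Dp : i0 ∉ Dp := fun hmem => hi0D (Finset.mem_filter.mp hmem).1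
        have hBsum : ∑ i ∈ B, p i = p i0 + N := by
          rw [hB, Finset.sum_insert hi0Dp, hDpsum]
        have hle : ∑ i ∈ B, p i ≤
            ∑ i ∈ s.filter (fun i => y i ≤ y u ∧ y u < y i + h i), p i :=
          Finset.sum_le_sum_of_subset hBsub
        have := hcov (y u)
        omega
      -- cardinality decreases
      have hcard' : (s.filter (fun i => 0 < p i ∧ e' ≤ y i)).card ≤ n := by
        have hsub : s.filter (fun i => 0 < p i ∧ e' ≤ y i) ⊆ A.erase i0 := by
          intro j hj
          obtain ⟨hjs, hjp, hje'⟩ := Finset.mem_filter.mp hj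
          refine Finset.mem_erase.mpr ⟨?_, Finset.mem_filter.mpr ⟨hjs, hjp, by linarith⟩⟩
          intro hji0
          subst hji0
          linarith
        have h1 := Finset.card_le_card hsub
        have h2 := Finset.card_erase_of_mem hi0A
        omega
      obtain ⟨C', hC's, hC'prop, hC'disj, hC'cov⟩ := ih e' hcard' hinv'
      refine ⟨insert i0 C', ?_, ?_, ?_, ?_⟩
      · intro j hj
        rcases Finset.mem_insert.mp hj with rfl | hj'
        · exact hi0s
        · exact hC's hj'
      · intro j hj
        rcases Finset.mem_insert.mp hj with rfl | hj'
        · exact ⟨hi0p, hi0e⟩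
        · exact ⟨(hC'prop j hj').1, le_trans hee' (hC'prop j hj').2⟩
      · intro i hi j hj hne
        rcases Finset.mem_insert.mp hi with rfl | hi' <;>
          rcases Finset.mem_insert.mp hj with rfl | hj'
        · exact absurd rfl hne
        · exact Or.inl (hC'prop j hj').2
        · exact Or.inr (hC'prop i hi').2
        · exact hC'disj i hi' j hj' hne
      · intro t ht hdeep
        by_cases hte' : t < e'
        · -- i0 covers t : need y i0 ≤ t
          obtain ⟨j, hjs, hjp, hjey, hjyt, _⟩ := hinv t ht hdeep
          have hjA : j ∈ A := Finset.mem_filter.mpr ⟨hjs, hjp, hjey⟩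
          have := hi0min j hjA
          exact ⟨i0, Finset.mem_insert_self _ _, by linarith, hte'⟩
        · push_neg at hte'
          obtain ⟨c, hc, hcc⟩ := hC'cov t hte' hdeep
          exact ⟨c, Finset.mem_insert_of_mem hc, hcc⟩

lemma peel {ι : Type*} {g : ℝ → ℝ} (hg : IsDFF g) (y h : ι → ℝ) :
    ∀ (N : ℕ) (s : Finset ι) (p : ι → ℕ),
    (∀ i ∈ s, 0 < p i → 0 < h i ∧ 0 ≤ y i ∧ y i + h i ≤ 1) →
    (∀ t : ℝ, (∑ i ∈ s.filter (fun i => y i ≤ t ∧ t < y i + h i), p i) ≤ N) →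
    ∑ i ∈ s, (p i : ℝ) * g (h i) ≤ N := by
  intro N
  induction N with
  | zero =>
    intro s p hitem hcov
    have hz : ∀ i ∈ s, (p i : ℝ) * g (h i) = 0 := by
      intro i hi
      rcases Nat.eq_zero_or_pos (p i) with hp | hp
      · rw [hp]; simp
      · exfalso
        obtain ⟨hh1, hy1, _⟩ := hitem i hi hp
        have hmem : i ∈ s.filter (fun j => y j ≤ y i ∧ y i < y j + h j) :=
          Finset.mem_filter.mpr ⟨hi, le_refl _, by linarith⟩
        have := Finset.single_le_sum (f := p) (fun j _ => Nat.zero_le _) hmem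
        have := hcov (y i)
        omega
    rw [Finset.sum_congr rfl hz]
    simp
  | succ N ih =>
    intro s p hitem hcov
    have hh' : ∀ i ∈ s, 0 < p i → 0 < h i := fun i hi hp => (hitem i hi hp).1
    have hwit : ∀ t : ℝ,
        (∑ i ∈ s.filter (fun i => y i ≤ t ∧ t < y i + h i), p i) = N + 1 →
        ∃ j ∈ s, 0 < p j ∧ (0:ℝ) ≤ y j ∧ y j ≤ t ∧ t < y j + h j := by
      intro t hdeep
      have hne : ∑ i ∈ s.filter (fun i => y i ≤ t ∧ t < y i + h i), p i ≠ 0 := by omega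
      obtain ⟨j, hjmem, hjp⟩ := Finset.exists_ne_zero_of_sum_ne_zero hne
      obtain ⟨hjs, hjc⟩ := Finset.mem_filter.mp hjmem
      exact ⟨j, hjs, Nat.pos_of_ne_zero hjp, (hitem j hjs (Nat.pos_of_ne_zero hjp)).2.1,
        hjc.1, hjc.2⟩
    obtain ⟨C, hCs, hCprop, hCdisj, hCcov⟩ :=
      sweep s p y h (N+1) hh' hcov _ 0 (le_refl _) (fun t _ hdeep => hwit t hdeep)
    set p' := fun i => p i - (if i ∈ C then 1 else 0) with hp'
    have hcov' : ∀ t : ℝ, (∑ i ∈ s.filter (fun i => y i ≤ t ∧ t < y i + h i), p' i) ≤ N := by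
      intro t
      have hple : ∀ i ∈ s.filter (fun i => y i ≤ t ∧ t < y i + h i), p' i ≤ p i :=
        fun i _ => Nat.sub_le _ _
      by_cases hdeep : ∑ i ∈ s.filter (fun i => y i ≤ t ∧ t < y i + h i), p i = N + 1
      · obtain ⟨j, hjs, hjp, hjy0, hjyt, _⟩ := hwit t hdeep
        have ht0 : (0:ℝ) ≤ t := le_trans hjy0 hjyt
        obtain ⟨c, hcC, hcy, hcy2⟩ := hCcov t ht0 hdeep
        have hcD : c ∈ s.filter (fun i => y i ≤ t ∧ t < y i + h i) :=
          Finset.mem_filter.mpr ⟨hCs hcC, hcy, hcy2⟩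
        have hlt : ∑ i ∈ s.filter (fun i => y i ≤ t ∧ t < y i + h i), p' i <
            ∑ i ∈ s.filter (fun i => y i ≤ t ∧ t < y i + h i), p i := by
          apply Finset.sum_lt_sum hple
          refine ⟨c, hcD, ?_⟩
          have hcp : 0 < p c := (hCprop c hcC).1
          simp only [hp', if_pos hcC]
          omega
        omega
      · have := hcov t
        calc ∑ i ∈ s.filter (fun i => y i ≤ t ∧ t < y i + h i), p' i
            ≤ ∑ i ∈ s.filter (fun i => y i ≤ t ∧ t < y i + h i), p i :=
              Finset.sum_le_sum hple
          _ ≤ N := by omega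
    have hih := ih s p' (fun i hi hp =>
      hitem i hi (lt_of_lt_of_le hp (Nat.sub_le _ _))) hcov'
    -- the chain's g-sum is at most 1
    have hchain : ∑ i ∈ C, g (h i) ≤ 1 := by
      have hCitem : ∀ i ∈ C, 0 < h i ∧ 0 ≤ y i ∧ y i + h i ≤ 1 :=
        fun i hi => hitem i (hCs hi) (hCprop i hi).1
      have hsum : ∑ i ∈ C, h i ≤ 1 - 0 :=
        disj_sum y h C.card C 0 (le_refl _) (by norm_num)
          (fun i hi => le_of_lt (hCitem i hi).1)
          (fun i hi => (hCitem i hi).2.1)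
          (fun i hi => (hCitem i hi).2.2)
          hCdisj
      have hmem : ∀ z ∈ C.val.map h, z ∈ Set.Icc (0:ℝ) 1 := by
        intro z hz
        obtain ⟨i, hi, rfl⟩ := Multiset.mem_map.mp hz
        obtain ⟨h1, h2, h3⟩ := hCitem i hi
        exact ⟨le_of_lt h1, by linarith⟩
      have hS := hg.2 (C.val.map h) hmem (by
        show (C.val.map h).sum ≤ 1
        rw [show (C.val.map h).sum = ∑ i ∈ C, h i from rfl]
        linarith)
      rw [Multiset.map_map] at hS
      exact le_trans (le_of_eq (by rfl)) hS
    -- decompose the sum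
    have hdecomp : ∑ i ∈ s, (p i : ℝ) * g (h i) =
        ∑ i ∈ s, (p' i : ℝ) * g (h i) + ∑ i ∈ C, g (h i) := by
      have h1 : ∀ i ∈ s, (p i : ℝ) * g (h i) =
          (p' i : ℝ) * g (h i) + (if i ∈ C then g (h i) else 0) := by
        intro i hi
        by_cases hiC : i ∈ C
        · have hcp : 0 < p i := (hCprop i hiC).1
          simp only [hp', if_pos hiC]
          rw [Nat.cast_sub hcp]
          push_cast
          ring
        · simp [hp', hiC]
      rw [Finset.sum_congr rfl h1, Finset.sum_add_distrib, Finset.sum_ite_mem,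
        Finset.inter_eq_right.mpr hCs]
    rw [hdecomp]
    push_cast
    linarith

lemma claimA {ι : Type*} {g : ℝ → ℝ} (hg : IsDFF g) (y h : ι → ℝ) (s : Finset ι)
    (a : ι → ℝ) (ha : ∀ i ∈ s, a i ∈ Set.Icc (0:ℝ) 1)
    (hitem : ∀ i ∈ s, 0 < h i ∧ 0 ≤ y i ∧ y i + h i ≤ 1)
    (hcov : ∀ t : ℝ, (∑ i ∈ s.filter (fun i => y i ≤ t ∧ t < y i + h i), a i) ≤ 1) :
    ∑ i ∈ s, a i * g (h i) ≤ 1 := by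
  have hgh : ∀ i ∈ s, 0 ≤ g (h i) ∧ g (h i) ≤ 1 := by
    intro i hi
    obtain ⟨h1, h2, h3⟩ := hitem i hi
    exact ⟨(hg.1 (h i) ⟨le_of_lt h1, by linarith⟩).1, (hg.1 (h i) ⟨le_of_lt h1, by linarith⟩).2⟩
  have key : ∀ N : ℕ, 0 < N →
      ∑ i ∈ s, a i * g (h i) ≤ 1 + (s.card : ℝ) / N := by
    intro N hN
    have hNpos : (0:ℝ) < N := by exact_mod_cast hN
    set p := fun i => ⌊(N:ℝ) * a i⌋₊ with hp
    have hcovp : ∀ t : ℝ, (∑ i ∈ s.filter (fun i => y i ≤ t ∧ t < y i + h i), p i) ≤ N := by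
      intro t
      have hsub : s.filter (fun i => y i ≤ t ∧ t < y i + h i) ⊆ s := Finset.filter_subset _ _
      have hcast : ((∑ i ∈ s.filter (fun i => y i ≤ t ∧ t < y i + h i), p i : ℕ) : ℝ)
          ≤ (N : ℝ) := by
        push_cast
        calc ∑ i ∈ s.filter (fun i => y i ≤ t ∧ t < y i + h i), ((p i : ℕ) : ℝ)
            ≤ ∑ i ∈ s.filter (fun i => y i ≤ t ∧ t < y i + h i), (N : ℝ) * a i := by
              apply Finset.sum_le_sum
              intro i hi
              exact Nat.floor_le (by
                have := (ha i (hsub hi)).1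
                positivity)
          _ = (N : ℝ) * ∑ i ∈ s.filter (fun i => y i ≤ t ∧ t < y i + h i), a i := by
              rw [Finset.mul_sum]
          _ ≤ (N : ℝ) * 1 := by
              apply mul_le_mul_of_nonneg_left (hcov t) (le_of_lt hNpos)
          _ = (N : ℝ) := by ring
      exact_mod_cast hcast
    have hpeel := peel hg y h N s p (fun i hi _ => hitem i hi) hcovp
    have hlow : ∑ i ∈ s, ((N:ℝ) * a i - 1) * g (h i) ≤ ∑ i ∈ s, (p i : ℝ) * g (h i) := by
      apply Finset.sum_le_sum
      intro i hi
      apply mul_le_mul_of_nonneg_right _ (hgh i hi).1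
      have := Nat.lt_floor_add_one ((N:ℝ) * a i)
      linarith
    have hcardb : ∑ i ∈ s, g (h i) ≤ (s.card : ℝ) := by
      calc ∑ i ∈ s, g (h i) ≤ ∑ i ∈ s, (1:ℝ) := Finset.sum_le_sum (fun i hi => (hgh i hi).2)
        _ = s.card := by simp
    have hexp : ∑ i ∈ s, ((N:ℝ) * a i - 1) * g (h i)
        = (N:ℝ) * ∑ i ∈ s, a i * g (h i) - ∑ i ∈ s, g (h i) := by
      rw [Finset.mul_sum, ← Finset.sum_sub_distrib]
      apply Finset.sum_congr rfl
      intro i _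
      ring
    have hfin : (N:ℝ) * ∑ i ∈ s, a i * g (h i) ≤ (N:ℝ) + (s.card : ℝ) := by
      rw [hexp] at hlow
      linarith
    rw [div_eq_inv_mul, ← mul_le_mul_iff_right₀ hNpos, mul_add]
    have hc : (N:ℝ) * ((N:ℝ)⁻¹ * (s.card:ℝ)) = (s.card:ℝ) := by
      rw [← mul_assoc, mul_inv_cancel₀ (ne_of_gt hNpos), one_mul]
    linarith
  by_contra hcon
  push_neg at hcon
  set ε := ∑ i ∈ s, a i * g (h i) - 1 with hε
  have hεpos : 0 < ε := by linarith
  obtain ⟨N, hNgt⟩ := exists_nat_gt ((s.card : ℝ) / ε)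
  have hNpos : 0 < N := by
    have : (0:ℝ) ≤ (s.card : ℝ) / ε := by positivity
    by_contra hN0
    push_neg at hN0
    interval_cases N
    simp at hNgt
    linarith
  have hNr : (0:ℝ) < N := by exact_mod_cast hNpos
  have hlt : (s.card : ℝ) / N < ε := by
    rw [div_lt_iff₀ hNr]
    rw [div_lt_iff₀ hεpos] at hNgt
    linarith [hNgt]
  have := key N hNpos
  have : ∑ i ∈ s, a i * g (h i) < 1 + ε := by linarith
  linarith

lemma bin_bound {ι : Type*} {f g : ℝ → ℝ} (hf : IsDFF f) (hg : IsDFF g)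
    (w h x y : ι → ℝ) (s : Finset ι)
    (hw : ∀ i, w i ∈ Set.Icc (0 : ℝ) 1) (hh : ∀ i, h i ∈ Set.Icc (0 : ℝ) 1)
    (hcont : ∀ i, 0 ≤ x i ∧ x i + w i ≤ 1 ∧ 0 ≤ y i ∧ y i + h i ≤ 1)
    (hdisj : ∀ i ∈ s, ∀ j ∈ s, i ≠ j →
      x i + w i ≤ x j ∨ x j + w j ≤ x i ∨ y i + h i ≤ y j ∨ y j + h j ≤ y i) :
    ∑ i ∈ s, f (w i) * g (h i) ≤ 1 := by
  have hred : ∑ i ∈ s.filter (fun i => 0 < h i), f (w i) * g (h i)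
      = ∑ i ∈ s, f (w i) * g (h i) := by
    apply Finset.sum_filter_of_ne
    intro i _ hne
    by_contra hnp
    push_neg at hnp
    have h0 : h i = 0 := le_antisymm hnp (hh i).1
    rw [h0, dff_zero hg, mul_zero] at hne
    exact hne rfl
  rw [← hred]
  apply claimA hg y h (s.filter (fun i => 0 < h i)) (fun i => f (w i))
  · intro i _
    exact hf.1 (w i) (hw i)
  · intro i hi
    exact ⟨(Finset.mem_filter.mp hi).2, (hcont i).2.2.1, (hcont i).2.2.2⟩
  · intro t
    set D := (s.filter (fun i => 0 < h i)).filter (fun i => y i ≤ t ∧ t < y i + h i) with hD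
    have hDs : ∀ i ∈ D, i ∈ s := by
      intro i hi
      exact Finset.mem_filter.mp ((Finset.mem_filter.mp hi).1) |>.1
    have hDc : ∀ i ∈ D, y i ≤ t ∧ t < y i + h i := fun i hi => (Finset.mem_filter.mp hi).2
    have hxdisj : ∀ i ∈ D, ∀ j ∈ D, i ≠ j → x i + w i ≤ x j ∨ x j + w j ≤ x i := by
      intro i hi j hj hne
      rcases hdisj i (hDs i hi) j (hDs j hj) hne with h1 | h1 | h1 | h1
      · exact Or.inl h1
      · exact Or.inr h1
      · exact absurd h1 (by have := hDc i hi; have := hDc j hj; intro hc; linarith [this.1, this.2])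
      · exact absurd h1 (by have := hDc i hi; have := hDc j hj; intro hc; linarith [this.1, this.2])
    have hwsum : ∑ i ∈ D, w i ≤ 1 - 0 :=
      disj_sum x w D.card D 0 (le_refl _) (by norm_num)
        (fun i _ => (hw i).1)
        (fun i _ => (hcont i).1)
        (fun i _ => (hcont i).2.1)
        hxdisj
    have hmem : ∀ z ∈ D.val.map w, z ∈ Set.Icc (0:ℝ) 1 := by
      intro z hz
      obtain ⟨i, _, rfl⟩ := Multiset.mem_map.mp hz
      exact hw i
    have hS := hf.2 (D.val.map w) hmem (by
      show (D.val.map w).sum ≤ 1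
      rw [show (D.val.map w).sum = ∑ i ∈ D, w i from rfl]
      linarith)
    rw [Multiset.map_map] at hS
    exact hS

/-- If `f, g` are DFFs and (normalized) items are partitioned into `k` unit-square bins,
each bin feasibly packed, then the modified area in each bin is at most 1, and the
rounded-up total modified area is a lower bound on the number of bins. -/
theorem stmt_6 {ι : Type*} [Fintype ι] [DecidableEq ι] (f g : ℝ → ℝ)
    (hf : IsDFF f) (hg : IsDFF g) (w h : ι → ℝ)
    (hw : ∀ i, w i ∈ Set.Icc (0 : ℝ) 1) (hh : ∀ i, h i ∈ Set.Icc (0 : ℝ) 1)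
    (k : ℕ) (bin : ι → Fin k) (x y : ι → ℝ)
    (hcont : ∀ i, 0 ≤ x i ∧ x i + w i ≤ 1 ∧ 0 ≤ y i ∧ y i + h i ≤ 1)
    (hdisj : ∀ i j, i ≠ j → bin i = bin j →
      x i + w i ≤ x j ∨ x j + w j ≤ x i ∨ y i + h i ≤ y j ∨ y j + h j ≤ y i) :
    (∀ b : Fin k, ∑ i ∈ univ.filter (fun i => bin i = b), f (w i) * g (h i) ≤ 1) ∧
    (⌈∑ i, f (w i) * g (h i)⌉ ≤ (k : ℤ)) := by
  have hpart1 : ∀ b : Fin k,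
      ∑ i ∈ univ.filter (fun i => bin i = b), f (w i) * g (h i) ≤ 1 := by
    intro b
    apply bin_bound hf hg w h x y _ hw hh hcont
    intro i hi j hj hne
    have hbi : bin i = b := (Finset.mem_filter.mp hi).2
    have hbj : bin j = b := (Finset.mem_filter.mp hj).2
    exact hdisj i j hne (hbi.trans hbj.symm)
  refine ⟨hpart1, ?_⟩
  rw [Int.ceil_le]
  push_cast
  rw [← Finset.sum_fiberwise univ bin (fun i => f (w i) * g (h i))]
  calc ∑ b : Fin k, ∑ i ∈ univ.filter (fun i => bin i = b), f (w i) * g (h i)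
      ≤ ∑ _b : Fin k, (1:ℝ) := Finset.sum_le_sum (fun b _ => hpart1 b)
    _ = k := by simp
end

section
/- Validity of the 'packing a subset of items' reduction for strip packing: suppose items are sorted by non-increasing width with w₁ > W/2, let B = { i : wᵢ = w₁ } and S = { j : wⱼ ≤ W − w₁ }. If all items of S can be feasibly packed into the rectangle of width W − w₁ and height Σ_{i∈B} hᵢ, then there is an optimal strip packing solution in which the items of B are stacked left-aligned at the bottom of the strip (occupying [0, w₁] × [0, Σ_{i∈B} hᵢ]) and the items of S are packed in the adjacent rectangle [w₁, W] × [0, Σ_{i∈B} hᵢ]; moreover the optimal height of the full instance equals Σ_{i∈B} hᵢ plus the optimal strip-packing height of the remaining items I ∖ (B ∪ S). -/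
open Finset

/-- Feasibility of packing the items of `J` into a strip of width `W` with height `k`. -/
def feasibleIn {ι : Type*} (J : Finset ι) (w h : ι → ℕ) (W k : ℕ) : Prop :=
  ∃ x y : ι → ℕ, (∀ i ∈ J, x i + w i ≤ W ∧ y i + h i ≤ k) ∧
    ∀ i ∈ J, ∀ j ∈ J, i ≠ j →
      x i + w i ≤ x j ∨ x j + w j ≤ x i ∨ y i + h i ≤ y j ∨ y j + h j ≤ y i

/-- Optimal strip packing height of the items of `J`. -/
noncomputable def stripOPT {ι : Type*} (J : Finset ι) (w h : ι → ℕ) (W : ℕ) : ℕ :=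
  sInf {k : ℕ | feasibleIn J w h W k}

/-!
Every item of `B` is wider than `W / 2`, and every item of `I ∖ (B ∪ S)` is too wide to stand
beside an item of `B`; so in any packing each item of `B` is vertically separated from all other
items of `B` and from all of `I ∖ (B ∪ S)`. Deleting the rows occupied by `B` and dropping `S`
turns an optimal packing into a packing of `I ∖ (B ∪ S)` of height `OPT - Σ_B h`. Conversely,
stacking `B` at the left, putting the given packing of `S` beside it and an optimal packing of
`I ∖ (B ∪ S)` on top attains `Σ_B h + OPT(I ∖ (B ∪ S))`.
-/

lemma Finset.disjoint_Ico_Ico_of_le_or_le {a b c d : ℕ} (h : b ≤ c ∨ d ≤ a) :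
    Disjoint (Ico a b) (Ico c d) :=
  disjoint_left.2 fun s hs ht => by
    rw [mem_Ico] at hs ht
    omega

section RowSqueeze

def freeRowsBelow (U : Finset ℕ) (t : ℕ) : ℕ := #(range t \ U)

variable {U : Finset ℕ}

lemma freeRowsBelow_mono (U : Finset ℕ) : Monotone (freeRowsBelow U) := fun _ _ hst =>
  card_le_card (sdiff_subset_sdiff (range_subset_range.2 hst) subset_rfl)

lemma freeRowsBelow_add {a m : ℕ} (hU : Disjoint (Ico a (a + m)) U) :
    freeRowsBelow U (a + m) = freeRowsBelow U a + m := by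
  have hsplit : range (a + m) = range a ∪ Ico a (a + m) := by
    rw [range_eq_Ico, range_eq_Ico, Ico_union_Ico_eq_Ico (Nat.zero_le a) (Nat.le_add_right a m)]
  have hd : Disjoint (range a \ U) (Ico a (a + m)) :=
    (range_eq_Ico (a := a) ▸ Ico_disjoint_Ico_consecutive 0 a (a + m)).mono_left sdiff_subset
  rw [freeRowsBelow, freeRowsBelow, hsplit, union_sdiff_distrib, sdiff_eq_self_of_disjoint hU,
    card_union_of_disjoint hd, Nat.card_Ico, Nat.add_sub_cancel_left]

lemma freeRowsBelow_of_subset {k : ℕ} (hU : U ⊆ range k) : freeRowsBelow U k = k - #U := by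
  rw [freeRowsBelow, card_sdiff_of_subset hU, card_range]

end RowSqueeze

section Packing

variable {ι : Type*}

lemma card_biUnion_Ico_eq_sum {B : Finset ι} {h y : ι → ℕ}
    (hB : ∀ i ∈ B, ∀ j ∈ B, i ≠ j → y i + h i ≤ y j ∨ y j + h j ≤ y i) :
    #(B.biUnion fun i => Ico (y i) (y i + h i)) = ∑ i ∈ B, h i := by
  rw [card_biUnion fun i hi j hj hij => disjoint_Ico_Ico_of_le_or_le (hB i hi j hj hij)]
  simp

def IsPacking (J : Finset ι) (w h : ι → ℕ) (W k : ℕ) (x y : ι → ℕ) : Prop :=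
  (∀ i ∈ J, x i + w i ≤ W ∧ y i + h i ≤ k) ∧
    ∀ i ∈ J, ∀ j ∈ J, i ≠ j →
      x i + w i ≤ x j ∨ x j + w j ≤ x i ∨ y i + h i ≤ y j ∨ y j + h j ≤ y i

lemma feasibleIn_iff_exists_isPacking {J : Finset ι} {w h : ι → ℕ} {W k : ℕ} :
    feasibleIn J w h W k ↔ ∃ x y, IsPacking J w h W k x y := Iff.rfl

namespace IsPacking

variable {J J₁ J₂ : Finset ι} {w h x y x₁ y₁ x₂ y₂ : ι → ℕ} {W W₁ W₂ k k₁ k₂ : ℕ}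

lemma subset (p : IsPacking J w h W k x y) {J' : Finset ι} (hJ : J' ⊆ J) :
    IsPacking J' w h W k x y :=
  ⟨fun i hi => p.1 i (hJ hi), fun i hi j hj => p.2 i (hJ hi) j (hJ hj)⟩

lemma vsep_of_wide (p : IsPacking J w h W k x y) {i j : ι} (hi : i ∈ J) (hj : j ∈ J)
    (hij : i ≠ j) (hwide : W < w i + w j) : y i + h i ≤ y j ∨ y j + h j ≤ y i := by
  have := (p.1 i hi).1
  have := (p.1 j hj).1
  have := p.2 i hi j hj hij
  omega

lemma union [DecidableEq ι] (hd : Disjoint J₁ J₂) (p₁ : IsPacking J₁ w h W k x₁ y₁)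
    (p₂ : IsPacking J₂ w h W k x₂ y₂)
    (hsep : ∀ i ∈ J₁, ∀ j ∈ J₂, x₁ i + w i ≤ x₂ j ∨ x₂ j + w j ≤ x₁ i ∨
      y₁ i + h i ≤ y₂ j ∨ y₂ j + h j ≤ y₁ i) :
    IsPacking (J₁ ∪ J₂) w h W k (J₁.piecewise x₁ x₂) (J₁.piecewise y₁ y₂) := by
  have hnot : ∀ j ∈ J₂, j ∉ J₁ := fun j hj hj₁ => disjoint_left.1 hd hj₁ hj
  constructor
  · intro i hi
    rcases mem_union.1 hi with hi | hi
    · simpa only [piecewise_eq_of_mem _ _ _ hi] using p₁.1 i hi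
    · simpa only [piecewise_eq_of_notMem _ _ _ (hnot i hi)] using p₂.1 i hi
  · intro i hi j hj hij
    rcases mem_union.1 hi with hi | hi <;> rcases mem_union.1 hj with hj | hj
    · simpa only [piecewise_eq_of_mem _ _ _ hi, piecewise_eq_of_mem _ _ _ hj] using
        p₁.2 i hi j hj hij
    · simpa only [piecewise_eq_of_mem _ _ _ hi, piecewise_eq_of_notMem _ _ _ (hnot j hj)] using
        hsep i hi j hj
    · simp only [piecewise_eq_of_notMem _ _ _ (hnot i hi), piecewise_eq_of_mem _ _ _ hj]
      have := hsep j hj i hi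
      tauto
    · simpa only [piecewise_eq_of_notMem _ _ _ (hnot i hi),
        piecewise_eq_of_notMem _ _ _ (hnot j hj)] using p₂.2 i hi j hj hij

lemma union_beside [DecidableEq ι] (hd : Disjoint J₁ J₂) (p₁ : IsPacking J₁ w h W₁ k x₁ y₁)
    (p₂ : IsPacking J₂ w h W₂ k x₂ y₂) :
    IsPacking (J₁ ∪ J₂) w h (W₁ + W₂) k (J₁.piecewise x₁ (x₂ · + W₁)) (J₁.piecewise y₁ y₂) := by
  refine union hd ⟨fun i hi => ?_, p₁.2⟩ ⟨fun i hi => ?_, fun i hi j hj hij => ?_⟩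
    fun i hi j _ => Or.inl ?_
  · have := p₁.1 i hi; omega
  · have := p₂.1 i hi; dsimp only; omega
  · have := p₂.2 i hi j hj hij; dsimp only; omega
  · have := p₁.1 i hi; omega

lemma union_above [DecidableEq ι] (hd : Disjoint J₁ J₂) (p₁ : IsPacking J₁ w h W k₁ x₁ y₁)
    (p₂ : IsPacking J₂ w h W k₂ x₂ y₂) :
    IsPacking (J₁ ∪ J₂) w h W (k₁ + k₂) (J₁.piecewise x₁ x₂) (J₁.piecewise y₁ (y₂ · + k₁)) := by
  refine union hd ⟨fun i hi => ?_, p₁.2⟩ ⟨fun i hi => ?_, fun i hi j hj hij => ?_⟩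
    fun i hi j _ => Or.inr (Or.inr (Or.inl ?_))
  · have := p₁.1 i hi; omega
  · have := p₂.1 i hi; dsimp only; omega
  · have := p₂.2 i hi j hj hij; dsimp only; omega
  · have := p₁.1 i hi; omega

/-- Deleting the rows `U`, which no item crosses, moves each item down by the number of deleted
rows below it. -/
lemma squeezeRows {U : Finset ℕ} (p : IsPacking J w h W k x y) (hU : U ⊆ range k)
    (hJ : ∀ i ∈ J, Disjoint (Ico (y i) (y i + h i)) U) :
    IsPacking J w h W (k - #U) x (freeRowsBelow U ∘ y) := by
  have hshift : ∀ i ∈ J, freeRowsBelow U (y i + h i) = freeRowsBelow U (y i) + h i :=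
    fun i hi => freeRowsBelow_add (hJ i hi)
  refine ⟨fun i hi => ⟨(p.1 i hi).1, ?_⟩, fun i hi j hj hij => ?_⟩
  · have := freeRowsBelow_mono U (p.1 i hi).2
    rwa [freeRowsBelow_of_subset hU, hshift i hi] at this
  · have hi' := hshift i hi
    have hj' := hshift j hj
    rcases p.2 i hi j hj hij with hc | hc | hc | hc
    · exact Or.inl hc
    · exact Or.inr (Or.inl hc)
    · have := freeRowsBelow_mono U hc
      simp only [Function.comp_apply]
      omega
    · have := freeRowsBelow_mono U hc
      simp only [Function.comp_apply]
      omega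

end IsPacking

lemma exists_isPacking_stack (J : Finset ι) (w h : ι → ℕ) {W : ℕ} (hw : ∀ i ∈ J, w i ≤ W) :
    ∃ y, IsPacking J w h W (∑ i ∈ J, h i) 0 y := by
  classical
  induction J using Finset.induction_on with
  | empty => exact ⟨0, by simp [IsPacking]⟩
  | insert a J ha ih =>
    obtain ⟨y, p⟩ := ih fun i hi => hw i (mem_insert_of_mem hi)
    have pa : IsPacking {a} w h W (h a) 0 0 :=
      ⟨by simpa using hw a (mem_insert_self a J), by simp⟩
    have := pa.union_above (disjoint_singleton_left.2 ha) p
    rw [piecewise_same, ← insert_eq, ← sum_insert ha] at this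
    exact ⟨_, this⟩

lemma feasibleIn_stripOPT (J : Finset ι) (w h : ι → ℕ) {W : ℕ} (hw : ∀ i ∈ J, w i ≤ W) :
    feasibleIn J w h W (stripOPT J w h W) :=
  Nat.sInf_mem (s := {k | feasibleIn J w h W k}) ⟨_, 0, exists_isPacking_stack J w h hw⟩

lemma IsPacking.sum_add_stripOPT_le {J B R : Finset ι} {w h x y : ι → ℕ} {W k : ℕ}
    (p : IsPacking J w h W k x y) (hB : B ⊆ J) (hR : R ⊆ J) (hdisj : Disjoint B R)
    (hBB : ∀ i ∈ B, ∀ j ∈ B, i ≠ j → W < w i + w j) (hBR : ∀ i ∈ B, ∀ j ∈ R, W < w i + w j) :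
    ∑ i ∈ B, h i + stripOPT R w h W ≤ k := by
  set U := B.biUnion fun i => Ico (y i) (y i + h i)
  have hUk : U ⊆ range k := fun s hs => by
    obtain ⟨i, hi, hs⟩ := mem_biUnion.1 hs
    have := (p.1 i (hB hi)).2
    rw [mem_Ico] at hs
    rw [mem_range]
    omega
  have hcard : #U = ∑ i ∈ B, h i := card_biUnion_Ico_eq_sum fun i hi j hj hij =>
    p.vsep_of_wide (hB hi) (hB hj) hij (hBB i hi j hj hij)
  have hRU : ∀ j ∈ R, Disjoint (Ico (y j) (y j + h j)) U := fun j hj => by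
    refine (disjoint_biUnion_right _ _ _).2 fun i hi => disjoint_Ico_Ico_of_le_or_le ?_
    have hij : i ≠ j := by rintro rfl; exact disjoint_left.1 hdisj hi hj
    exact (p.vsep_of_wide (hB hi) (hR hj) hij (hBR i hi j hj)).symm
  have hOPT : stripOPT R w h W ≤ k - #U := Nat.sInf_le ⟨x, _, (p.subset hR).squeezeRows hUk hRU⟩
  have hUle : #U ≤ k := by simpa using card_le_card hUk
  omega

lemma exists_isPacking_stack_beside_below [DecidableEq ι] {B S R : Finset ι} {w h : ι → ℕ}
    {W w₁ k : ℕ} (hw₁ : w₁ ≤ W) (hB : ∀ i ∈ B, w i ≤ w₁) (hBS : Disjoint B S)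
    (hR : Disjoint (B ∪ S) R) (hS : feasibleIn S w h (W - w₁) (∑ i ∈ B, h i))
    (hRk : feasibleIn R w h W k) :
    ∃ x y, IsPacking (B ∪ S ∪ R) w h W (∑ i ∈ B, h i + k) x y ∧
      (∀ i ∈ B, x i = 0 ∧ y i + h i ≤ ∑ i ∈ B, h i) ∧
      (∀ j ∈ S, w₁ ≤ x j ∧ y j + h j ≤ ∑ i ∈ B, h i) := by
  obtain ⟨yB, pB⟩ := exists_isPacking_stack B w h hB
  obtain ⟨xS, yS, pS⟩ := feasibleIn_iff_exists_isPacking.1 hS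
  obtain ⟨xR, yR, pR⟩ := feasibleIn_iff_exists_isPacking.1 hRk
  have pBS := pB.union_beside hBS pS
  rw [Nat.add_sub_cancel' hw₁] at pBS
  refine ⟨_, _, pBS.union_above hR pR, fun i hi => ?_, fun j hj => ?_⟩
  · simpa [hi] using (pB.1 i hi).2
  · have hjB : j ∉ B := disjoint_right.1 hBS hj
    simpa [hj, hjB] using (pS.1 j hj).2

end Packing

theorem stmt_12_general {ι : Type*} [Fintype ι] [DecidableEq ι] (w h : ι → ℕ) (W w1 : ℕ)
    (hw : ∀ i, 0 < w i ∧ w i ≤ W)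
    (hw1 : W < 2 * w1) (hex : ∃ i, w i = w1)
    (B S : Finset ι)
    (hB : B = univ.filter (fun i => w i = w1))
    (hS : S = univ.filter (fun i => w i ≤ W - w1))
    (HB : ℕ) (hHB : HB = ∑ i ∈ B, h i)
    (hpackS : feasibleIn S w h (W - w1) HB) :
    (∃ x y : ι → ℕ,
      (∀ i, x i + w i ≤ W ∧ y i + h i ≤ stripOPT univ w h W) ∧
      (∀ i j, i ≠ j →
        x i + w i ≤ x j ∨ x j + w j ≤ x i ∨ y i + h i ≤ y j ∨ y j + h j ≤ y i) ∧
      (∀ i ∈ B, x i = 0 ∧ y i + h i ≤ HB) ∧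
      (∀ j ∈ S, w1 ≤ x j ∧ y j + h j ≤ HB)) ∧
    stripOPT univ w h W = HB + stripOPT (univ \ (B ∪ S)) w h W := by
  subst hHB
  have hw1W : w1 ≤ W := hex.elim fun i hi => hi ▸ (hw i).2
  have hmemB : ∀ i, i ∈ B ↔ w i = w1 := by simp [hB]
  have hmemS : ∀ i, i ∈ S ↔ w i ≤ W - w1 := by simp [hS]
  set R := univ \ (B ∪ S)
  have hBS : Disjoint B S := disjoint_left.2 fun i hiB hiS => by
    rw [hmemB] at hiB; rw [hmemS] at hiS; omega
  have hBB : ∀ i ∈ B, ∀ j ∈ B, i ≠ j → W < w i + w j := fun i hi j hj _ => by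
    rw [hmemB] at hi hj; omega
  have hBR : ∀ i ∈ B, ∀ j ∈ R, W < w i + w j := fun i hi j hj => by
    simp only [R, mem_sdiff, mem_union, mem_univ, true_and, hmemB, hmemS] at hi hj
    omega
  obtain ⟨x, y, pAll, hxyB, hxyS⟩ := exists_isPacking_stack_beside_below hw1W
    (fun i hi => ((hmemB i).1 hi).le) hBS disjoint_sdiff hpackS
    (feasibleIn_stripOPT R w h fun i _ => (hw i).2)
  rw [union_sdiff_of_subset (subset_univ _)] at pAll
  obtain ⟨xO, yO, pO⟩ := feasibleIn_iff_exists_isPacking.1 <|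
    feasibleIn_stripOPT univ w h fun i _ => (hw i).2
  have hopt : stripOPT univ w h W = ∑ i ∈ B, h i + stripOPT R w h W :=
    le_antisymm (Nat.sInf_le ⟨_, _, pAll⟩) <| pO.sum_add_stripOPT_le (subset_univ B)
      (subset_univ R) (disjoint_sdiff.mono_left subset_union_left) hBB hBR
  exact ⟨⟨x, y, fun i => hopt ▸ pAll.1 i (mem_univ i),
    fun i j => pAll.2 i (mem_univ i) j (mem_univ j), hxyB, hxyS⟩, hopt⟩

/-- Martello–Monaci–Vigo reduction: if all items of `S` fit beside the pile of the
widest items `B`, then there is an optimal strip packing with `B` stacked left-aligned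
at the bottom and `S` packed beside it, and the optimum decomposes additively. -/
theorem stmt_12 {ι : Type*} [Fintype ι] [DecidableEq ι] (w h : ι → ℕ) (W w1 : ℕ)
    (hw : ∀ i, 0 < w i ∧ w i ≤ W) (hh : ∀ i, 0 < h i)
    (hw1 : W < 2 * w1) (hmax : ∀ i, w i ≤ w1) (hex : ∃ i, w i = w1)
    (B S : Finset ι)
    (hB : B = univ.filter (fun i => w i = w1))
    (hS : S = univ.filter (fun i => w i ≤ W - w1))
    (HB : ℕ) (hHB : HB = ∑ i ∈ B, h i)
    (hpackS : feasibleIn S w h (W - w1) HB) :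
    (∃ x y : ι → ℕ,
      (∀ i, x i + w i ≤ W ∧ y i + h i ≤ stripOPT univ w h W) ∧
      (∀ i j, i ≠ j →
        x i + w i ≤ x j ∨ x j + w j ≤ x i ∨ y i + h i ≤ y j ∨ y j + h j ≤ y i) ∧
      (∀ i ∈ B, x i = 0 ∧ y i + h i ≤ HB) ∧
      (∀ j ∈ S, w1 ≤ x j ∧ y j + h j ≤ HB)) ∧
    stripOPT univ w h W = HB + stripOPT (univ \ (B ∪ S)) w h W :=
  stmt_12_general w h W w1 hw hw1 hex B S hB hS HB hHB hpackS
end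

section
/- Meet-in-the-middle dominance (Côté–Iori, 1D version): fix a threshold t ∈ {1,…,W}. Any feasible packing of 1D items of sizes wᵢ into a bin of capacity W can be transformed into a feasible packing in which every item i whose placement satisfies xᵢ + wᵢ ≤ t has xᵢ in the left-aligned normal-pattern set (a sum of widths of other items), and every item with xᵢ + wᵢ > t has its right edge xᵢ + wᵢ equal to W minus a sum of widths of other items; moreover the resulting set of candidate positions is a subset of (a shift of) the normal patterns, hence never larger. -/
open Finset

/-- Sum of widths of pairwise disjoint intervals contained in `[m, M)` is at most `M - m`. -/
lemma sum_w_le_of_disjoint {ι : Type*} [DecidableEq ι] (S : Finset ι) (w x : ι → ℕ) (m M : ℕ)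
    (hin : ∀ i ∈ S, m ≤ x i ∧ x i + w i ≤ M)
    (hd : ∀ i ∈ S, ∀ j ∈ S, i ≠ j → x i + w i ≤ x j ∨ x j + w j ≤ x i) :
    ∑ j ∈ S, w j ≤ M - m := by
  classical
  have key : (S.biUnion (fun j => Finset.Ico (x j) (x j + w j))).card
      = ∑ j ∈ S, (Finset.Ico (x j) (x j + w j)).card := by
    apply Finset.card_biUnion
    intro i hi j hj hij
    rcases hd i hi j hj hij with h | h <;>
    · apply Finset.disjoint_left.mpr
      intro a ha hb
      simp only [Finset.mem_Ico] at ha hb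
      omega
  have hsub : S.biUnion (fun j => Finset.Ico (x j) (x j + w j)) ⊆ Finset.Ico m M := by
    intro a ha
    simp only [Finset.mem_biUnion, Finset.mem_Ico] at ha ⊢
    obtain ⟨j, hj, h1, h2⟩ := ha
    have := hin j hj
    omega
  have hcard := Finset.card_le_card hsub
  rw [key] at hcard
  simp only [Nat.card_Ico] at hcard
  calc ∑ j ∈ S, w j = ∑ j ∈ S, (Finset.Ico (x j) (x j + w j)).card := by
        simp [Nat.card_Ico]
    _ ≤ M - m := by simpa [Nat.card_Ico] using hcard

/-- Meet-in-the-middle dominance (1D): given a threshold `t`, any feasible 1D packing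
can be transformed into one in which items ending at or before `t` are left-aligned at
normal-pattern positions, and items ending after `t` are right-aligned so that their
right edge is `W` minus a normal pattern. -/
theorem stmt_17 {ι : Type*} [Fintype ι] [DecidableEq ι] (w : ι → ℕ) (W t : ℕ)
    (ht : 1 ≤ t ∧ t ≤ W) (hw : ∀ i, 0 < w i)
    (x : ι → ℕ) (hcont : ∀ i, x i + w i ≤ W)
    (hdisj : ∀ i j, i ≠ j → x i + w i ≤ x j ∨ x j + w j ≤ x i) :
    ∃ x' : ι → ℕ,
      (∀ i, x' i + w i ≤ W) ∧
      (∀ i j, i ≠ j → x' i + w i ≤ x' j ∨ x' j + w j ≤ x' i) ∧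
      (∀ i,
        (x' i + w i ≤ t → ∃ S : Finset ι, i ∉ S ∧ x' i = ∑ j ∈ S, w j) ∧
        (t < x' i + w i → ∃ S : Finset ι, i ∉ S ∧ x' i + w i + ∑ j ∈ S, w j = W)) := by
  classical
  -- left items: those ending at or before t
  set S : ι → Finset ι := fun i =>
    Finset.univ.filter (fun j => x j + w j ≤ t ∧ x j < x i) with hS
  set T : ι → Finset ι := fun i =>
    Finset.univ.filter (fun j => t < x j + w j ∧ x i < x j) with hT
  set x' : ι → ℕ := fun i =>
    if x i + w i ≤ t then ∑ j ∈ S i, w j else W - w i - ∑ j ∈ T i, w j with hx'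
  have hmemS : ∀ i j, j ∈ S i ↔ x j + w j ≤ t ∧ x j < x i := by
    intro i j; simp [hS]
  have hmemT : ∀ i j, j ∈ T i ↔ t < x j + w j ∧ x i < x j := by
    intro i j; simp [hT]
  have hiS : ∀ i, i ∉ S i := by intro i h; rw [hmemS] at h; omega
  have hiT : ∀ i, i ∉ T i := by intro i h; rw [hmemT] at h; omega
  -- left items: compressed position is ≤ original position
  have hleft : ∀ i, x i + w i ≤ t → ∑ j ∈ S i, w j ≤ x i := by
    intro i hi
    have := sum_w_le_of_disjoint (S i) w x 0 (x i)
      (by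
        intro j hj
        rw [hmemS] at hj
        rcases hdisj i j (by rintro rfl; omega) with h | h <;> omega)
      (by
        intro a ha b hb hab
        exact hdisj a b hab)
    omega
  -- right items: there is room on the right
  have hright : ∀ i, t < x i + w i → w i + ∑ j ∈ T i, w j ≤ W - x i := by
    intro i hi
    have := sum_w_le_of_disjoint (insert i (T i)) w x (x i) W
      (by
        intro j hj
        rcases Finset.mem_insert.mp hj with rfl | hj
        · exact ⟨le_refl _, hcont j⟩
        · rw [hmemT] at hj
          rcases hdisj i j (by rintro rfl; omega) with h | h <;>
            [exact ⟨by omega, hcont j⟩; omega])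
      (by
        intro a _ b _ hab
        exact hdisj a b hab)
    rwa [Finset.sum_insert (hiT i)] at this
  -- values of x' on left/right items
  have hx'left : ∀ i, x i + w i ≤ t → x' i = ∑ j ∈ S i, w j := by
    intro i hi; simp [hx', hi]
  have hx'right : ∀ i, t < x i + w i → x' i + w i + ∑ j ∈ T i, w j = W ∧ x i ≤ x' i := by
    intro i hi
    have h1 := hright i hi
    have h2 := hcont i
    have : x' i = W - w i - ∑ j ∈ T i, w j := by
      simp [hx', show ¬ (x i + w i ≤ t) by omega]
    omega
  -- key order facts
  have hLL : ∀ i j, x i + w i ≤ t → x j + w j ≤ t → x i < x j →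
      x' i + w i ≤ x' j := by
    intro i j hi hj hij
    rw [hx'left i hi, hx'left j hj]
    have hsub : insert i (S i) ⊆ S j := by
      intro k hk
      rcases Finset.mem_insert.mp hk with rfl | hk
      · rw [hmemS]; exact ⟨hi, hij⟩
      · rw [hmemS] at hk ⊢; omega
    have := Finset.sum_le_sum_of_subset (f := w) hsub
    rw [Finset.sum_insert (hiS i)] at this
    omega
  have hRR : ∀ i j, t < x i + w i → t < x j + w j → x i < x j →
      x' i + w i ≤ x' j := by
    intro i j hi hj hij
    obtain ⟨hei, _⟩ := hx'right i hi
    obtain ⟨hej, _⟩ := hx'right j hj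
    have hsub : insert j (T j) ⊆ T i := by
      intro k hk
      rcases Finset.mem_insert.mp hk with rfl | hk
      · rw [hmemT]; exact ⟨hj, hij⟩
      · rw [hmemT] at hk ⊢; omega
    have := Finset.sum_le_sum_of_subset (f := w) hsub
    rw [Finset.sum_insert (hiT j)] at this
    omega
  have hLR : ∀ i j, x i + w i ≤ t → t < x j + w j → x' i + w i ≤ x' j := by
    intro i j hi hj
    have hne : i ≠ j := by rintro rfl; omega
    have hord : x i + w i ≤ x j := by
      rcases hdisj i j hne with h | h
      · exact h
      · omega
    have h1 := hleft i hi
    obtain ⟨_, h2⟩ := hx'right j hj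
    rw [hx'left i hi]
    omega
  refine ⟨x', ?_, ?_, ?_⟩
  · intro i
    by_cases hi : x i + w i ≤ t
    · have := hleft i hi
      rw [hx'left i hi]; omega
    · obtain ⟨he, _⟩ := hx'right i (by omega)
      omega
  · intro i j hne
    have hxne : x i ≠ x j := by
      rcases hdisj i j hne with h | h <;> have := hw i <;> have := hw j <;> omega
    by_cases hi : x i + w i ≤ t <;> by_cases hj : x j + w j ≤ t
    · rcases lt_or_gt_of_ne hxne with h | h
      · exact Or.inl (hLL i j hi hj h)
      · exact Or.inr (hLL j i hj hi h)
    · exact Or.inl (hLR i j hi (by omega))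
    · exact Or.inr (hLR j i hj (by omega))
    · rcases lt_or_gt_of_ne hxne with h | h
      · exact Or.inl (hRR i j (by omega) (by omega) h)
      · exact Or.inr (hRR j i (by omega) (by omega) h)
  · intro i
    by_cases hi : x i + w i ≤ t
    · have h1 := hleft i hi
      have h2 := hx'left i hi
      constructor
      · intro _; exact ⟨S i, hiS i, h2⟩
      · intro hcontra; omega
    · obtain ⟨he, hge⟩ := hx'right i (by omega)
      constructor
      · intro hcontra; omega
      · intro _; exact ⟨T i, hiT i, he⟩
end
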